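/- arXiv:2502.04567 — 3 statements merged into one kernel-verified Lean document; each statement's English description precedes it below -/
import Mathlib

section
/- Let Y be a finite type, μ a strictly positive probability mass function on Y, r : Y → ℝ, Z = ∑_y μ(y)·exp(r(y)), and p(y) = μ(y)·exp(r(y))/Z. For y₀,...,y_M ∈ Y, let Ẑ(y₀,...,y_M) = (1/(M+1))·∑_{i=0}^M exp(r(y_i)). If y₀ is drawn from p and y₁,...,y_M are drawn i.i.d. from μ, then the joint density of (y₀,...,y_M) marginalized over the uniform random index z (i.e., the symmetrized mixture ∑_{i=0}^M (1/(M+1)) p(y_i) ∏_{j≠i} μ(y_j)) equals (Ẑ(y₀,...,y_M)/Z)·∏_{j=0}^M μ(y_j). -/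
open Finset

theorem Finset.sum_mul_mul_prod_erase {ι R : Type*} [Fintype ι] [DecidableEq ι] [CommSemiring R]
    (a g : ι → R) :
    ∑ i, a i * g i * ∏ j ∈ univ.erase i, g j = (∑ i, a i) * ∏ j, g j := by
  rw [sum_mul]
  refine sum_congr rfl fun i hi => ?_
  rw [mul_assoc, mul_prod_erase univ g hi]

theorem stmt_8_general {Y : Type*} [Fintype Y] (M : ℕ) (μ : Y → ℝ)
    (r : Y → ℝ)
    (y : Fin (M + 1) → Y) :
    ∑ i, (1 / (M + 1 : ℝ)) *
        (μ (y i) * Real.exp (r (y i)) / ∑ y', μ y' * Real.exp (r y')) *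
        ∏ j ∈ Finset.univ.erase i, μ (y j)
      = ((1 / (M + 1 : ℝ)) * ∑ i, Real.exp (r (y i))) /
          (∑ y', μ y' * Real.exp (r y')) * ∏ j, μ (y j) := by
  set Z := ∑ y', μ y' * Real.exp (r y')
  have summand (i : Fin (M + 1)) :
      1 / (M + 1 : ℝ) * (μ (y i) * Real.exp (r (y i)) / Z) =
        1 / (M + 1 : ℝ) * Real.exp (r (y i)) / Z * μ (y i) := by
    ring
  simp_rw [summand, sum_mul_mul_prod_erase (fun i => 1 / (M + 1 : ℝ) * Real.exp (r (y i)) / Z),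
    ← sum_div, ← mul_sum]

theorem stmt_8 {Y : Type*} [Fintype Y] (M : ℕ) (μ : Y → ℝ)
    (hμ : ∀ y, 0 < μ y) (hμsum : ∑ y, μ y = 1) (r : Y → ℝ)
    (y : Fin (M + 1) → Y) :
    ∑ i, (1 / (M + 1 : ℝ)) *
        (μ (y i) * Real.exp (r (y i)) / ∑ y', μ y' * Real.exp (r y')) *
        ∏ j ∈ Finset.univ.erase i, μ (y j)
      = ((1 / (M + 1 : ℝ)) * ∑ i, Real.exp (r (y i))) /
          (∑ y', μ y' * Real.exp (r y')) * ∏ j, μ (y j) :=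
  stmt_8_general M μ r y
end

section
/- Let Y be a finite type, μ a strictly positive probability mass function on Y, and r_θ : ℝ → Y → ℝ differentiable in the scalar parameter θ. Define Z(θ) = ∑_y μ(y)·exp(r_θ(y)), p_θ(y) = μ(y)·exp(r_θ(y))/Z(θ), and for a tuple (y₀,...,y_M) ∈ Y^{M+1} define Ẑ_θ(y₀,...,y_M) = (1/(M+1))·∑_{i=0}^M exp(r_θ(y_i)). Then the expectation of d/dθ log Ẑ_θ(y₀,...,y_M), where y₀ ~ p_θ and y₁,...,y_M i.i.d. ~ μ, equals d/dθ log Z(θ). That is, ∑_{y₀,...,y_M} p_θ(y₀)·∏_{i=1}^M μ(y_i) · (d/dθ) log Ẑ_θ(y₀,...,y_M) = (d/dθ) log Z(θ). -/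
/-!
Write `e = exp ∘ r_θ` and `d = ∂_θ r_θ`. Up to the factor `1 / Z(θ)`, the online weight of a tuple
is the product weight `∏ μ(yᵢ)` times `e(y₀)`, and `∂_θ log Ẑ_θ = ∑ d(yᵢ) e(yᵢ) / ∑ e(yᵢ)`.
The product weight is exchangeable, so `e(y₀)` may be replaced by any `e(y_j)`; averaging over `j`
cancels the self-normalising denominator and leaves `∑ μ d e = Z'(θ)`.
-/

open Finset Real

section ProductWeights

variable {ι Y : Type*} [Fintype ι] [DecidableEq ι] [Fintype Y] (μ : Y → ℝ)

theorem sum_prod_mul_apply (hμ : ∑ z, μ z = 1) (g : Y → ℝ) (j : ι) :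
    ∑ y : ι → Y, (∏ i, μ (y i)) * g (y j) = ∑ z, μ z * g z := by
  set f : ι → Y → ℝ := Function.update (fun _ => μ) j (fun z => μ z * g z)
  have hf_ne : ∀ i ∈ ({j}ᶜ : Finset ι), f i = μ := fun i hi =>
    Function.update_of_ne (by simpa using hi) _ _
  have hterm (y : ι → Y) : (∏ i, μ (y i)) * g (y j) = ∏ i, f i (y i) := by
    rw [Fintype.prod_eq_mul_prod_compl j, Fintype.prod_eq_mul_prod_compl j (fun i => f i (y i)),
      prod_congr rfl fun i hi => congrFun (hf_ne i hi) (y i)]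
    simp only [f, Function.update_self]
    ring
  rw [sum_congr rfl fun y _ => hterm y, ← Fintype.prod_sum, Fintype.prod_eq_mul_prod_compl j,
    prod_congr rfl fun i hi => by rw [hf_ne i hi, hμ]]
  simp [f]

theorem sum_prod_mul_comp_perm (Φ : (ι → Y) → ℝ) (σ : Equiv.Perm ι) :
    ∑ y : ι → Y, (∏ i, μ (y i)) * Φ (y ∘ σ) = ∑ y : ι → Y, (∏ i, μ (y i)) * Φ y := by
  refine Fintype.sum_equiv (σ.symm.arrowCongr (Equiv.refl Y)) _ _ fun y => ?_
  have : σ.symm.arrowCongr (Equiv.refl Y) y = y ∘ σ := rfl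
  rw [this, ← Equiv.prod_comp σ]
  rfl

theorem sum_prod_mul_apply_mul_sum_div_sum (hμ : ∑ z, μ z = 1) {e : Y → ℝ} (he : ∀ z, 0 < e z)
    (h : Y → ℝ) (j : ι) :
    ∑ y : ι → Y, (∏ i, μ (y i)) * (e (y j) * (∑ i, h (y i)) / ∑ i, e (y i)) =
      ∑ z, μ z * h z := by
  set Φ : ι → (ι → Y) → ℝ := fun k y => e (y k) * (∑ i, h (y i)) / ∑ i, e (y i)
  have hΦ_swap (k : ι) (y : ι → Y) : Φ j (y ∘ Equiv.swap j k) = Φ k y := by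
    simp only [Φ, Function.comp_apply, Equiv.swap_apply_left,
      Equiv.sum_comp (Equiv.swap j k) (fun i => h (y i)),
      Equiv.sum_comp (Equiv.swap j k) (fun i => e (y i))]
  have hsymm (k : ι) : ∑ y : ι → Y, (∏ i, μ (y i)) * Φ k y =
      ∑ y : ι → Y, (∏ i, μ (y i)) * Φ j y := by
    simp only [← hΦ_swap k, sum_prod_mul_comp_perm]
  have hΦ_sum (y : ι → Y) : ∑ k, Φ k y = ∑ i, h (y i) := by
    have : (∑ i, e (y i)) ≠ 0 := (sum_pos (fun i _ => he _) ⟨j, mem_univ j⟩).ne'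
    simp only [Φ, ← sum_div, ← sum_mul]
    field_simp
  have hcard : (Fintype.card ι : ℝ) ≠ 0 := Nat.cast_ne_zero.mpr (Fintype.card_pos_iff.mpr ⟨j⟩).ne'
  refine mul_left_cancel₀ hcard ?_
  calc (Fintype.card ι : ℝ) * ∑ y : ι → Y, (∏ i, μ (y i)) * Φ j y
      = ∑ k, ∑ y : ι → Y, (∏ i, μ (y i)) * Φ k y := by simp [hsymm]
    _ = ∑ i, ∑ y : ι → Y, (∏ i, μ (y i)) * h (y i) := by
      simp only [sum_comm (γ := ι), ← mul_sum, hΦ_sum]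
    _ = (Fintype.card ι : ℝ) * ∑ z, μ z * h z := by simp [sum_prod_mul_apply μ hμ]

end ProductWeights

theorem hasDerivAt_log_sum_mul_exp {ι : Type*} [Fintype ι] {c : ι → ℝ} {f : ℝ → ι → ℝ}
    {f' : ι → ℝ} {θ : ℝ} (hf : ∀ i, HasDerivAt (fun t => f t i) (f' i) θ)
    (hZ : ∑ i, c i * exp (f θ i) ≠ 0) :
    HasDerivAt (fun t => log (∑ i, c i * exp (f t i)))
      ((∑ i, c i * (f' i * exp (f θ i))) / ∑ i, c i * exp (f θ i)) θ := by
  refine HasDerivAt.log ?_ hZ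
  exact HasDerivAt.fun_sum fun i _ => by simpa [mul_comm] using ((hf i).exp).const_mul (c i)

theorem stmt_9 {Y : Type*} [Fintype Y] (M : ℕ) (μ : Y → ℝ)
    (hμ : ∀ y, 0 < μ y) (hμsum : ∑ y, μ y = 1)
    (r : ℝ → Y → ℝ) (θ : ℝ)
    (hr : ∀ z, DifferentiableAt ℝ (fun t => r t z) θ) :
    ∑ y : Fin (M + 1) → Y,
        (μ (y 0) * Real.exp (r θ (y 0)) / ∑ z, μ z * Real.exp (r θ z)) *
          (∏ i ∈ Finset.univ.erase 0, μ (y i)) *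
          deriv (fun t => Real.log ((1 / (M + 1 : ℝ)) * ∑ i, Real.exp (r t (y i)))) θ
      = deriv (fun t => Real.log (∑ z, μ z * Real.exp (r t z))) θ := by
  set e : Y → ℝ := fun z => exp (r θ z)
  set d : Y → ℝ := fun z => deriv (fun t => r t z) θ
  have hd (z : Y) : HasDerivAt (fun t => r t z) (d z) θ := (hr z).hasDerivAt
  have hY : Nonempty Y := by
    by_contra hY
    simp [not_nonempty_iff.mp hY] at hμsum
  have hZ : ∑ z, μ z * e z ≠ 0 :=
    (sum_pos (fun z _ => mul_pos (hμ z) (exp_pos _)) univ_nonempty).ne'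
  have hZ_deriv := (hasDerivAt_log_sum_mul_exp hd hZ).deriv
  have hZhat_deriv (y : Fin (M + 1) → Y) :
      deriv (fun t => log ((1 / (M + 1 : ℝ)) * ∑ i, exp (r t (y i)))) θ =
        (∑ i, d (y i) * e (y i)) / ∑ i, e (y i) := by
    have hc : (1 / (M + 1 : ℝ)) ≠ 0 := by positivity
    have hZhat : ∑ i, 1 / (M + 1 : ℝ) * e (y i) ≠ 0 := by
      rw [← mul_sum]; exact mul_ne_zero hc (sum_pos (fun i _ => exp_pos _) univ_nonempty).ne'
    simp only [mul_sum]
    rw [(hasDerivAt_log_sum_mul_exp (fun i => hd (y i)) hZhat).deriv, ← mul_sum, ← mul_sum,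
      mul_div_mul_left _ _ hc]
  have hterm (y : Fin (M + 1) → Y) :
      (μ (y 0) * exp (r θ (y 0)) / ∑ z, μ z * exp (r θ z)) * (∏ i ∈ univ.erase 0, μ (y i)) *
          deriv (fun t => log ((1 / (M + 1 : ℝ)) * ∑ i, exp (r t (y i)))) θ =
        (∏ i, μ (y i)) * (e (y 0) * (∑ i, d (y i) * e (y i)) / ∑ i, e (y i)) /
          ∑ z, μ z * e z := by
    rw [hZhat_deriv, ← mul_prod_erase univ (fun i => μ (y i)) (mem_univ 0)]
    ring
  rw [sum_congr rfl fun y _ => hterm y, ← sum_div, hZ_deriv,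
    sum_prod_mul_apply_mul_sum_div_sum μ hμsum (fun z => exp_pos _) (fun z => d z * e z)]
end

section
/- Let Y be a finite type, π_ref a strictly positive probability mass function on Y, r : Y → ℝ, and β > 0. Define π*(y) = π_ref(y)·exp(r(y)/β)/Z with Z = ∑_y π_ref(y)·exp(r(y)/β). Then π* is the unique maximizer over probability mass functions π (with support contained in Y) of the objective ∑_y π(y)·r(y) - β·∑_y π(y)·log(π(y)/π_ref(y)). -/
/-!
Writing `Z = ∑ y, πref y * exp (r y / β)`, one has `log (π* y / πref y) = r y / β - log Z`, so the
objective of every probability vector `π` equals `β * (log Z - KL(π ‖ π*))`. Gibbs' inequality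
(`KL ≥ 0`, with equality only at `π = π*`) then gives existence and uniqueness of the maximizer.
-/

open InformationTheory Finset

section KullbackLeibler

open Real

variable {ι : Type*} [Fintype ι] {p q : ι → ℝ}

lemma sum_mul_log_div_eq_sum_mul_klFun (hq : ∀ i, q i ≠ 0) (hp1 : ∑ i, p i = 1)
    (hq1 : ∑ i, q i = 1) :
    ∑ i, p i * log (p i / q i) = ∑ i, q i * klFun (p i / q i) := by
  have hterm : ∀ i, q i * klFun (p i / q i) = p i * log (p i / q i) + (q i - p i) := by
    intro i
    rw [klFun_apply]
    field_simp [hq i]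
    ring
  simp only [hterm, sum_add_distrib, sum_sub_distrib, hp1, hq1, sub_self, add_zero]

lemma sum_mul_log_div_nonneg (hp : ∀ i, 0 ≤ p i) (hq : ∀ i, 0 < q i) (hp1 : ∑ i, p i = 1)
    (hq1 : ∑ i, q i = 1) :
    0 ≤ ∑ i, p i * log (p i / q i) := by
  rw [sum_mul_log_div_eq_sum_mul_klFun (fun i => (hq i).ne') hp1 hq1]
  exact sum_nonneg fun i _ => mul_nonneg (hq i).le (klFun_nonneg (div_nonneg (hp i) (hq i).le))

lemma eq_of_sum_mul_log_div_eq_zero (hp : ∀ i, 0 ≤ p i) (hq : ∀ i, 0 < q i)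
    (hp1 : ∑ i, p i = 1) (hq1 : ∑ i, q i = 1) (h : ∑ i, p i * log (p i / q i) = 0) :
    p = q := by
  rw [sum_mul_log_div_eq_sum_mul_klFun (fun i => (hq i).ne') hp1 hq1] at h
  have hnonneg : ∀ i ∈ univ, 0 ≤ q i * klFun (p i / q i) := fun i _ =>
    mul_nonneg (hq i).le (klFun_nonneg (div_nonneg (hp i) (hq i).le))
  funext i
  have hi := (sum_eq_zero_iff_of_nonneg hnonneg).1 h i (mem_univ i)
  rw [mul_eq_zero, or_iff_right (hq i).ne',
    klFun_eq_zero_iff (div_nonneg (hp i) (hq i).le), div_eq_one_iff_eq (hq i).ne'] at hi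
  exact hi

end KullbackLeibler

section Gibbs

open Real

variable {Y : Type*}

lemma mul_log_div_eq_add {x a b : ℝ} (ha : a ≠ 0) (hb : b ≠ 0) :
    x * log (x / a) = x * log (x / b) + x * log (b / a) := by
  rcases eq_or_ne x 0 with rfl | hx
  · simp
  · rw [← mul_add, ← log_mul (div_ne_zero hx hb) (div_ne_zero hb ha), div_mul_div_cancel₀ hb]

lemma gibbs_pos {πref r πstar : Y → ℝ} {β Z : ℝ} (href : ∀ y, 0 < πref y) (hZ : 0 < Z)
    (hπstar : ∀ y, πstar y = πref y * exp (r y / β) / Z) (y : Y) : 0 < πstar y := by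
  rw [hπstar y]
  exact div_pos (mul_pos (href y) (exp_pos _)) hZ

variable [Fintype Y]

noncomputable def klRegularizedObjective (πref r : Y → ℝ) (β : ℝ) (p : Y → ℝ) : ℝ :=
  (∑ y, p y * r y) - β * ∑ y, p y * log (p y / πref y)

lemma klRegularizedObjective_eq_of_gibbs {πref r πstar p : Y → ℝ} {β Z : ℝ}
    (href : ∀ y, 0 < πref y) (hβ : β ≠ 0) (hZ : 0 < Z)
    (hπstar : ∀ y, πstar y = πref y * exp (r y / β) / Z) (hp1 : ∑ y, p y = 1) :
    klRegularizedObjective πref r β p = β * (log Z - ∑ y, p y * log (p y / πstar y)) := by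
  have hπstar_pos := gibbs_pos href hZ hπstar
  have hlog : ∀ y, log (πstar y / πref y) = r y / β - log Z := fun y => by
    rw [hπstar y, div_right_comm, mul_div_cancel_left₀ _ (href y).ne',
      log_div (exp_ne_zero _) hZ.ne', log_exp]
  have hterm : ∀ y, p y * log (p y / πref y)
      = p y * log (p y / πstar y) + p y * r y / β - p y * log Z := fun y => by
    rw [mul_log_div_eq_add (href y).ne' (hπstar_pos y).ne', hlog]
    ring
  have hsplit : ∑ y, p y * log (p y / πref y)
      = ∑ y, p y * log (p y / πstar y) + (∑ y, p y * r y) / β - log Z := by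
    rw [sum_congr rfl fun y _ => hterm y, sum_sub_distrib, sum_add_distrib, ← sum_div, ← sum_mul,
      hp1, one_mul]
  rw [klRegularizedObjective, hsplit]
  field_simp
  ring

end Gibbs

theorem stmt_10_general {Y : Type*} [Fintype Y] (πref : Y → ℝ)
    (href : ∀ y, 0 < πref y)
    (r : Y → ℝ) (β : ℝ) (hβ : 0 < β)
    (πstar : Y → ℝ)
    (hπstar : ∀ y, πstar y =
      πref y * Real.exp (r y / β) / ∑ y', πref y' * Real.exp (r y' / β)) :
    (∀ π : Y → ℝ, (∀ y, 0 ≤ π y) → ∑ y, π y = 1 →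
      (∑ y, π y * r y) - β * ∑ y, π y * Real.log (π y / πref y) ≤
        (∑ y, πstar y * r y) - β * ∑ y, πstar y * Real.log (πstar y / πref y)) ∧
    (∀ π : Y → ℝ, (∀ y, 0 ≤ π y) → ∑ y, π y = 1 →
      (∑ y, π y * r y) - β * ∑ y, π y * Real.log (π y / πref y) =
        (∑ y, πstar y * r y) - β * ∑ y, πstar y * Real.log (πstar y / πref y) →
      π = πstar) := by
  rcases isEmpty_or_nonempty Y with hY | hY
  · refine ⟨fun π _ hπ1 => ?_, fun π _ hπ1 _ => ?_⟩ <;> simp at hπ1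
  set Z := ∑ y', πref y' * Real.exp (r y' / β)
  have hZ : 0 < Z := sum_pos (fun y _ => mul_pos (href y) (Real.exp_pos _)) univ_nonempty
  have hπstar_pos := gibbs_pos href hZ hπstar
  have hπstar_sum : ∑ y, πstar y = 1 := by
    simp_rw [hπstar]
    rw [← sum_div, div_self hZ.ne']
  have hobj := fun π => klRegularizedObjective_eq_of_gibbs (p := π) href hβ.ne' hZ hπstar
  have hobj_star : klRegularizedObjective πref r β πstar = β * Real.log Z := by
    simp [hobj πstar hπstar_sum, div_self (hπstar_pos _).ne']
  refine ⟨fun π hπ hπ1 => ?_, fun π hπ hπ1 heq => ?_⟩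
  · change klRegularizedObjective πref r β π ≤ klRegularizedObjective πref r β πstar
    rw [hobj π hπ1, hobj_star]
    exact mul_le_mul_of_nonneg_left
      (sub_le_self _ (sum_mul_log_div_nonneg hπ hπstar_pos hπ1 hπstar_sum)) hβ.le
  · change klRegularizedObjective πref r β π = klRegularizedObjective πref r β πstar at heq
    rw [hobj π hπ1, hobj_star] at heq
    exact eq_of_sum_mul_log_div_eq_zero hπ hπstar_pos hπ1 hπstar_sum
      (sub_eq_self.1 (mul_left_cancel₀ hβ.ne' heq))

theorem stmt_10 {Y : Type*} [Fintype Y] (πref : Y → ℝ)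
    (href : ∀ y, 0 < πref y) (hrefsum : ∑ y, πref y = 1)
    (r : Y → ℝ) (β : ℝ) (hβ : 0 < β)
    (πstar : Y → ℝ)
    (hπstar : ∀ y, πstar y =
      πref y * Real.exp (r y / β) / ∑ y', πref y' * Real.exp (r y' / β)) :
    (∀ π : Y → ℝ, (∀ y, 0 ≤ π y) → ∑ y, π y = 1 →
      (∑ y, π y * r y) - β * ∑ y, π y * Real.log (π y / πref y) ≤
        (∑ y, πstar y * r y) - β * ∑ y, πstar y * Real.log (πstar y / πref y)) ∧
    (∀ π : Y → ℝ, (∀ y, 0 ≤ π y) → ∑ y, π y = 1 →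
      (∑ y, π y * r y) - β * ∑ y, π y * Real.log (π y / πref y) =
        (∑ y, πstar y * r y) - β * ∑ y, πstar y * Real.log (πstar y / πref y) →
      π = πstar) :=
  stmt_10_general πref href r β hβ πstar hπstar
end
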